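/- arXiv:2405.14449 — 2 statements merged into one kernel-verified Lean document; each statement's English description precedes it below -/
import Mathlib

section
/- If q and q* are two probability densities on R^D × R^D with identical marginals (q(x0)=q*(x0) and q(x1)=q*(x1)), and both have the functional form q(x0,x1)=q(x0)·C(x0)·exp(-||x1-x0||²/(2ε))·φ(x1) and q*(x0,x1)=q*(x0)·C*(x0)·exp(-||x1-x0||²/(2ε))·φ*(x1) for positive functions C, φ, C*, φ*, then KL(q*||q) = -KL(q||q*), and consequently q = q* almost everywhere. -/
set_option maxHeartbeats 1000000


open MeasureTheory Real
open Filter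

lemma clamp_abs_le (n s : ℝ) (hn : 0 ≤ n) : |max (-n) (min n s)| ≤ n := by
  rw [abs_le]
  exact ⟨le_max_left _ _, max_le (by linarith) (min_le_left _ _)⟩

lemma clamp_eq (n s : ℝ) (h : |s| ≤ n) : max (-n) (min n s) = s := by
  rw [abs_le] at h
  rw [min_eq_right h.2, max_eq_right h.1]

lemma clamp_add_abs_le (n s t : ℝ) (hn : 0 ≤ n) :
    |max (-n) (min n s) + max (-n) (min n t)| ≤ |s + t| := by
  simp only [max_def, min_def]
  split_ifs <;>
    (rw [abs_le]
     obtain ⟨he, hsgn⟩ | ⟨he, hsgn⟩ := abs_cases (s + t) <;> rw [he] <;>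
      constructor <;> linarith)


/-- Kullback–Leibler divergence between two probability densities w.r.t. a measure. -/
noncomputable def kl {α : Type*} [MeasurableSpace α] (μ : Measure α) (p q : α → ℝ) : ℝ :=
  ∫ z, p z * Real.log (p z / q z) ∂μ

/-- If two probability densities `q`, `qs` on `ℝ^D × ℝ^D` have identical marginals and
both have the Schrödinger product form `q(x0,x1) = q(x0)·C(x0)·exp(-‖x1-x0‖²/(2ε))·φ(x1)`,
then `KL(qs‖q) = -KL(q‖qs)` and hence `q = qs` almost everywhere. -/
theorem stmt0 {D : ℕ} (ε : ℝ) (hε : 0 < ε)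
    (q qs : (EuclideanSpace ℝ (Fin D)) × (EuclideanSpace ℝ (Fin D)) → ℝ)
    (C φ Cs φs : EuclideanSpace ℝ (Fin D) → ℝ)
    (hq0 : ∀ z, 0 ≤ q z) (hqs0 : ∀ z, 0 ≤ qs z)
    (hqP : ∫ z, q z = 1) (hqsP : ∫ z, qs z = 1)
    (hC : ∀ x, 0 < C x) (hφ : ∀ x, 0 < φ x) (hCs : ∀ x, 0 < Cs x) (hφs : ∀ x, 0 < φs x)
    (hmarg0 : ∀ x0, (∫ x1, q (x0, x1)) = ∫ x1, qs (x0, x1))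
    (hmarg1 : ∀ x1, (∫ x0, q (x0, x1)) = ∫ x0, qs (x0, x1))
    (hqform : ∀ x0 x1, q (x0, x1)
      = (∫ y, q (x0, y)) * C x0 * Real.exp (-‖x1 - x0‖ ^ 2 / (2 * ε)) * φ x1)
    (hqsform : ∀ x0 x1, qs (x0, x1)
      = (∫ y, qs (x0, y)) * Cs x0 * Real.exp (-‖x1 - x0‖ ^ 2 / (2 * ε)) * φs x1)
    (hint1 : Integrable (fun z => qs z * Real.log (qs z / q z)))
    (hint2 : Integrable (fun z => q z * Real.log (q z / qs z))) :
    kl volume qs q = - kl volume q qs ∧ q =ᵐ[volume] qs := by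
  classical
  -- basic integrability
  have hq_int : Integrable q := by
    by_contra h; rw [integral_undef h] at hqP; norm_num at hqP
  have hqs_int : Integrable qs := by
    by_contra h; rw [integral_undef h] at hqsP; norm_num at hqsP
  set m : EuclideanSpace ℝ (Fin D) → ℝ := fun x0 => ∫ x1, q (x0, x1) with hm
  have hm0 : ∀ x0, 0 ≤ m x0 := fun x0 => integral_nonneg (fun x1 => hq0 (x0, x1))
  have hqform' : ∀ x0 x1, q (x0, x1)
      = m x0 * C x0 * Real.exp (-‖x1 - x0‖ ^ 2 / (2 * ε)) * φ x1 := fun x0 x1 => hqform x0 x1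
  have hqsform' : ∀ x0 x1, qs (x0, x1)
      = m x0 * Cs x0 * Real.exp (-‖x1 - x0‖ ^ 2 / (2 * ε)) * φs x1 := by
    intro x0 x1
    rw [hqsform x0 x1, ← hmarg0 x0]
  have hqpos : ∀ x0 x1, m x0 ≠ 0 → 0 < q (x0, x1) := by
    intro x0 x1 hmx
    rw [hqform' x0 x1]
    have : 0 < m x0 := lt_of_le_of_ne (hm0 x0) (Ne.symm hmx)
    have h2 := hC x0; have h3 := hφ x1
    positivity
  have hqspos : ∀ x0 x1, m x0 ≠ 0 → 0 < qs (x0, x1) := by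
    intro x0 x1 hmx
    rw [hqsform' x0 x1]
    have : 0 < m x0 := lt_of_le_of_ne (hm0 x0) (Ne.symm hmx)
    have h2 := hCs x0; have h3 := hφs x1
    positivity
  have hqzero : ∀ x0 x1, m x0 = 0 → q (x0, x1) = 0 := by
    intro x0 x1 hmx; rw [hqform' x0 x1, hmx]; ring
  have hqszero : ∀ x0 x1, m x0 = 0 → qs (x0, x1) = 0 := by
    intro x0 x1 hmx; rw [hqsform' x0 x1, hmx]; ring
  set a : EuclideanSpace ℝ (Fin D) → ℝ := fun x0 => Real.log (Cs x0) - Real.log (C x0) with ha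
  set b : EuclideanSpace ℝ (Fin D) → ℝ := fun x1 => Real.log (φs x1) - Real.log (φ x1) with hb
  set L : (EuclideanSpace ℝ (Fin D)) × (EuclideanSpace ℝ (Fin D)) → ℝ :=
    fun z => Real.log (qs z / q z) with hL
  have hlog : ∀ x0 x1, m x0 ≠ 0 → L (x0, x1) = a x0 + b x1 := by
    intro x0 x1 hmx
    have hmpos : 0 < m x0 := lt_of_le_of_ne (hm0 x0) (Ne.symm hmx)
    have hexp : (0:ℝ) < Real.exp (-‖x1 - x0‖ ^ 2 / (2 * ε)) := Real.exp_pos _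
    have hC' : C x0 ≠ 0 := ne_of_gt (hC x0)
    have hφ' : φ x1 ≠ 0 := ne_of_gt (hφ x1)
    have hCs' : Cs x0 ≠ 0 := ne_of_gt (hCs x0)
    have hφs' : φs x1 ≠ 0 := ne_of_gt (hφs x1)
    have hexp' : Real.exp (-‖x1 - x0‖ ^ 2 / (2 * ε)) ≠ 0 := ne_of_gt hexp
    have hm' : m x0 ≠ 0 := hmx
    have hratio : qs (x0, x1) / q (x0, x1) = (Cs x0 * φs x1) / (C x0 * φ x1) := by
      rw [hqform' x0 x1, hqsform' x0 x1]
      field_simp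
    simp only [hL, hratio]
    rw [Real.log_div (mul_ne_zero hCs' hφs') (mul_ne_zero hC' hφ'),
      Real.log_mul hCs' hφs', Real.log_mul hC' hφ']
    simp only [ha, hb]
    ring
  set g : (EuclideanSpace ℝ (Fin D)) × (EuclideanSpace ℝ (Fin D)) → ℝ :=
    fun z => qs z * Real.log (qs z / q z) + q z * Real.log (q z / qs z) with hgdef
  have hg_int : Integrable g := hint1.add hint2
  have hlog' : ∀ x0 x1, m x0 ≠ 0 →
      Real.log (qs (x0, x1)) - Real.log (q (x0, x1)) = a x0 + b x1 := by
    intro x0 x1 hmx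
    rw [← Real.log_div (ne_of_gt (hqspos x0 x1 hmx)) (ne_of_gt (hqpos x0 x1 hmx))]
    exact hlog x0 x1 hmx
  have hg_eq : ∀ z : (EuclideanSpace ℝ (Fin D)) × (EuclideanSpace ℝ (Fin D)),
      g z = (qs z - q z) * (a z.1 + b z.2) := by
    intro z
    by_cases hmx : m z.1 = 0
    · have h1 : q z = 0 := hqzero z.1 z.2 hmx
      have h2 : qs z = 0 := hqszero z.1 z.2 hmx
      simp [hgdef, h1, h2]
    · have hqz : q z ≠ 0 := ne_of_gt (hqpos z.1 z.2 hmx)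
      have hqsz : qs z ≠ 0 := ne_of_gt (hqspos z.1 z.2 hmx)
      have e1 : Real.log (qs z) - Real.log (q z) = a z.1 + b z.2 := hlog' z.1 z.2 hmx
      simp only [hgdef]
      rw [Real.log_div hqsz hqz, Real.log_div hqz hqsz]
      linear_combination (qs z - q z) * e1
  have hg_nonneg : ∀ z : (EuclideanSpace ℝ (Fin D)) × (EuclideanSpace ℝ (Fin D)), 0 ≤ g z := by
    intro z
    by_cases hmx : m z.1 = 0
    · have h1 : q z = 0 := hqzero z.1 z.2 hmx
      have h2 : qs z = 0 := hqszero z.1 z.2 hmx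
      simp [hgdef, h1, h2]
    · have hqz : 0 < q z := hqpos z.1 z.2 hmx
      have hqsz : 0 < qs z := hqspos z.1 z.2 hmx
      have e1 : Real.log (qs z) - Real.log (q z) = a z.1 + b z.2 := hlog' z.1 z.2 hmx
      rw [hg_eq z, ← e1]
      rcases le_total (q z) (qs z) with h | h
      · have : Real.log (q z) ≤ Real.log (qs z) := Real.log_le_log hqz h
        nlinarith
      · have : Real.log (qs z) ≤ Real.log (q z) := Real.log_le_log hqsz h
        nlinarith
  -- measurable versions of the potentials
  have hvol : (volume : Measure ((EuclideanSpace ℝ (Fin D)) × (EuclideanSpace ℝ (Fin D))))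
      = (volume : Measure (EuclideanSpace ℝ (Fin D))).prod volume := Measure.volume_eq_prod _ _
  have hLae : AEMeasurable L := Real.measurable_log.comp_aemeasurable
    (hqs_int.aemeasurable.div hq_int.aemeasurable)
  set M := hLae.mk L with hMdef
  have hMmeas : Measurable M := hLae.measurable_mk
  have hLM : ∀ᵐ z ∂((volume : Measure (EuclideanSpace ℝ (Fin D))).prod volume), L z = M z := by
    rw [← hvol]; exact hLae.ae_eq_mk
  have hsect1 : ∀ᵐ x0 ∂(volume : Measure (EuclideanSpace ℝ (Fin D))),
      ∀ᵐ x1 ∂(volume : Measure (EuclideanSpace ℝ (Fin D))), L (x0, x1) = M (x0, x1) :=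
    Measure.ae_ae_of_ae_prod hLM
  have hswap : ∀ᵐ z ∂((volume : Measure (EuclideanSpace ℝ (Fin D))).prod volume),
      L (z.2, z.1) = M (z.2, z.1) :=
    Measure.measurePreserving_swap.quasiMeasurePreserving.tendsto_ae.eventually hLM
  have hsect2 : ∀ᵐ x1 ∂(volume : Measure (EuclideanSpace ℝ (Fin D))),
      ∀ᵐ x0 ∂(volume : Measure (EuclideanSpace ℝ (Fin D))), L (x0, x1) = M (x0, x1) :=
    Measure.ae_ae_of_ae_prod hswap
  have hq_int' : Integrable q ((volume : Measure (EuclideanSpace ℝ (Fin D))).prod volume) := by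
    rwa [← hvol]
  have hqs_int' : Integrable qs ((volume : Measure (EuclideanSpace ℝ (Fin D))).prod volume) := by
    rwa [← hvol]
  have hqsect : ∀ᵐ x0 ∂(volume : Measure (EuclideanSpace ℝ (Fin D))),
      Integrable (fun x1 => q (x0, x1)) volume := hq_int'.prod_right_ae
  have hqssect : ∀ᵐ x0 ∂(volume : Measure (EuclideanSpace ℝ (Fin D))),
      Integrable (fun x1 => qs (x0, x1)) volume := hqs_int'.prod_right_ae
  have hqsect1 : ∀ᵐ x1 ∂(volume : Measure (EuclideanSpace ℝ (Fin D))),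
      Integrable (fun x0 => q (x0, x1)) volume := hq_int'.prod_left_ae
  have hqssect1 : ∀ᵐ x1 ∂(volume : Measure (EuclideanSpace ℝ (Fin D))),
      Integrable (fun x0 => qs (x0, x1)) volume := hqs_int'.prod_left_ae
  -- the base volume is nonzero
  have hvolE : (volume : Measure (EuclideanSpace ℝ (Fin D))) ≠ 0 := by
    intro h0
    have hz : (volume : Measure ((EuclideanSpace ℝ (Fin D)) × (EuclideanSpace ℝ (Fin D)))) = 0 := by
      rw [hvol, h0]; simp
    rw [hz] at hqP
    simp at hqP
  haveI : (ae (volume : Measure (EuclideanSpace ℝ (Fin D)))).NeBot := ae_neBot.mpr hvolE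
  -- choose a good point x0₀ in the support
  have hex : ∃ x0, m x0 ≠ 0 ∧ (∀ᵐ x1 ∂(volume : Measure (EuclideanSpace ℝ (Fin D))),
      L (x0, x1) = M (x0, x1)) := by
    by_contra hcon
    push_neg at hcon
    have hma : ∀ᵐ x0 ∂(volume : Measure (EuclideanSpace ℝ (Fin D))), m x0 = 0 := by
      filter_upwards [hsect1] with x0 h1
      by_contra hmx
      exact hcon x0 hmx (h1.mono fun x hx hne => hne hx)
    have hq0ae : q =ᵐ[volume] (fun _ => (0:ℝ)) := by
      rw [hvol]
      filter_upwards [Measure.quasiMeasurePreserving_fst.tendsto_ae.eventually hma] with z hz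
      exact hqzero z.1 z.2 hz
    rw [integral_congr_ae hq0ae, integral_zero] at hqP
    norm_num at hqP
  obtain ⟨x0₀, hmx0, hgood⟩ := hex
  set b' : EuclideanSpace ℝ (Fin D) → ℝ := fun x1 => M (x0₀, x1) - a x0₀ with hb'def
  have hb'meas : Measurable b' := (hMmeas.comp measurable_prodMk_left).sub measurable_const
  have hb'eq : ∀ᵐ x1 ∂(volume : Measure (EuclideanSpace ℝ (Fin D))), b' x1 = b x1 := by
    filter_upwards [hgood] with x1 h
    have h2 := hlog x0₀ x1 hmx0
    simp only [hb'def]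
    rw [← h, h2]; ring
  obtain ⟨x1₀, hx1₀⟩ := hsect2.exists
  set a' : EuclideanSpace ℝ (Fin D) → ℝ := fun x0 => M (x0, x1₀) - b x1₀ with ha'def
  have ha'meas : Measurable a' := (hMmeas.comp measurable_prodMk_right).sub measurable_const
  have ha'eq : ∀ᵐ x0 ∂(volume : Measure (EuclideanSpace ℝ (Fin D))),
      m x0 ≠ 0 → a' x0 = a x0 := by
    filter_upwards [hx1₀] with x0 h hmx
    have h2 := hlog x0 x1₀ hmx
    simp only [ha'def]
    rw [← h, h2]; ring
  -- key a.e. identity on the product space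
  have hkey : ∀ᵐ z ∂(volume : Measure ((EuclideanSpace ℝ (Fin D)) × (EuclideanSpace ℝ (Fin D)))),
      (qs z - q z) * (a' z.1 + b' z.2) = g z := by
    rw [hvol]
    filter_upwards [Measure.quasiMeasurePreserving_fst.tendsto_ae.eventually ha'eq,
      Measure.quasiMeasurePreserving_snd.tendsto_ae.eventually hb'eq] with z h1 h2
    by_cases hmx : m z.1 = 0
    · rw [hg_eq z, hqzero z.1 z.2 hmx, hqszero z.1 z.2 hmx]
      ring
    · rw [h1 hmx, h2, hg_eq z]
  -- truncations
  set cl : ℕ → ℝ → ℝ := fun n s => max (-(n:ℝ)) (min (n:ℝ) s) with hcl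
  set F : ℕ → ((EuclideanSpace ℝ (Fin D)) × (EuclideanSpace ℝ (Fin D))) → ℝ :=
    fun n z => (qs z - q z) * (cl n (a' z.1) + cl n (b' z.2)) with hF
  have hu_int : Integrable (fun z => qs z - q z) := hqs_int.sub hq_int
  have hFmeas : ∀ n, AEStronglyMeasurable (F n) volume := fun n =>
    hu_int.aestronglyMeasurable.mul
      (((measurable_const.max (measurable_const.min (ha'meas.comp measurable_fst))).add
        (measurable_const.max (measurable_const.min (hb'meas.comp measurable_snd)))).aestronglyMeasurable)
  have hP1_int : ∀ n : ℕ, Integrable (fun z => (qs z - q z) * cl n (a' z.1)) volume := by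
    intro n
    apply Integrable.mono' (hu_int.abs.const_mul (n:ℝ))
    · exact hu_int.aestronglyMeasurable.mul
        (measurable_const.max (measurable_const.min (ha'meas.comp measurable_fst))).aestronglyMeasurable
    · refine ae_of_all _ fun z => ?_
      rw [Real.norm_eq_abs, abs_mul, mul_comm ((n:ℝ)) (|qs z - q z|)]
      exact mul_le_mul_of_nonneg_left (clamp_abs_le _ _ (Nat.cast_nonneg n)) (abs_nonneg _)
  have hP2_int : ∀ n : ℕ, Integrable (fun z => (qs z - q z) * cl n (b' z.2)) volume := by
    intro n
    apply Integrable.mono' (hu_int.abs.const_mul (n:ℝ))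
    · exact hu_int.aestronglyMeasurable.mul
        (measurable_const.max (measurable_const.min (hb'meas.comp measurable_snd))).aestronglyMeasurable
    · refine ae_of_all _ fun z => ?_
      rw [Real.norm_eq_abs, abs_mul, mul_comm ((n:ℝ)) (|qs z - q z|)]
      exact mul_le_mul_of_nonneg_left (clamp_abs_le _ _ (Nat.cast_nonneg n)) (abs_nonneg _)
  -- each truncated integral vanishes, by Fubini and equal marginals
  have hF0 : ∀ n : ℕ, (∫ z, F n z) = 0 := by
    intro n
    have hsplit : (∫ z, F n z) = ∫ z, ((qs z - q z) * cl n (a' z.1) + (qs z - q z) * cl n (b' z.2)) := by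
      apply integral_congr_ae
      refine ae_of_all _ fun z => ?_
      simp only [hF]; ring
    rw [hsplit, integral_add (hP1_int n) (hP2_int n)]
    have e1 : (∫ z, (qs z - q z) * cl n (a' z.1)) = 0 := by
      have hint : Integrable (fun z : (EuclideanSpace ℝ (Fin D)) × (EuclideanSpace ℝ (Fin D)) =>
          (qs z - q z) * cl n (a' z.1))
          ((volume : Measure (EuclideanSpace ℝ (Fin D))).prod volume) := by
        rw [← hvol]; exact hP1_int n
      rw [hvol, integral_prod _ hint]
      apply integral_eq_zero_of_ae
      filter_upwards [hqsect, hqssect] with x0 h1 h2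
      have e2 : (∫ x1, (qs (x0, x1) - q (x0, x1)) * cl n (a' x0))
          = (∫ x1, (qs (x0, x1) - q (x0, x1))) * cl n (a' x0) := integral_mul_const _ _
      rw [e2, integral_sub h2 h1, ← hmarg0 x0]
      simp
    have e2 : (∫ z, (qs z - q z) * cl n (b' z.2)) = 0 := by
      have hint : Integrable (fun z : (EuclideanSpace ℝ (Fin D)) × (EuclideanSpace ℝ (Fin D)) =>
          (qs z - q z) * cl n (b' z.2))
          ((volume : Measure (EuclideanSpace ℝ (Fin D))).prod volume) := by
        rw [← hvol]; exact hP2_int n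
      rw [hvol, integral_prod_symm _ hint]
      apply integral_eq_zero_of_ae
      filter_upwards [hqsect1, hqssect1] with x1 h1 h2
      have e3 : (∫ x0, (qs (x0, x1) - q (x0, x1)) * cl n (b' x1))
          = (∫ x0, (qs (x0, x1) - q (x0, x1))) * cl n (b' x1) := integral_mul_const _ _
      rw [e3, integral_sub h2 h1, ← hmarg1 x1]
      simp
    rw [e1, e2]; ring
  -- dominated convergence
  have hbound : ∀ n : ℕ, ∀ᵐ z ∂(volume : Measure ((EuclideanSpace ℝ (Fin D)) × (EuclideanSpace ℝ (Fin D)))),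
      ‖F n z‖ ≤ |g z| := by
    intro n
    filter_upwards [hkey] with z hz
    rw [← hz]
    simp only [hF, Real.norm_eq_abs, abs_mul]
    exact mul_le_mul_of_nonneg_left (clamp_add_abs_le _ _ _ (Nat.cast_nonneg n)) (abs_nonneg _)
  have hlim : ∀ᵐ z ∂(volume : Measure ((EuclideanSpace ℝ (Fin D)) × (EuclideanSpace ℝ (Fin D)))),
      Tendsto (fun n => F n z) atTop (nhds (g z)) := by
    filter_upwards [hkey] with z hz
    have hev : ∀ᶠ n : ℕ in atTop, F n z = g z := by
      filter_upwards [eventually_ge_atTop (⌈max |a' z.1| |b' z.2|⌉₊)] with n hn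
      have hn' : max |a' z.1| |b' z.2| ≤ (n:ℝ) := Nat.ceil_le.mp hn
      simp only [hF, hcl]
      rw [clamp_eq _ _ (le_trans (le_max_left _ _) hn'),
        clamp_eq _ _ (le_trans (le_max_right _ _) hn')]
      exact hz
    exact Tendsto.congr' (hev.mono fun n h => h.symm) tendsto_const_nhds
  have htend := tendsto_integral_of_dominated_convergence (μ := volume) (F := F) (f := g)
    (fun z => |g z|) hFmeas hg_int.abs hbound hlim
  have hconst : Tendsto (fun _ : ℕ => (0:ℝ)) atTop (nhds (∫ z, g z)) := by
    simpa [hF0] using htend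
  have hg0 : (∫ z, g z) = 0 := tendsto_nhds_unique hconst tendsto_const_nhds
  -- conclude
  have hklsum : kl volume qs q + kl volume q qs = 0 := by
    have e : (∫ z, g z) = kl volume qs q + kl volume q qs := by
      simp only [hgdef, kl]
      exact integral_add hint1 hint2
    linarith [hg0, e]
  refine ⟨by linarith, ?_⟩
  have hae0 : g =ᵐ[volume] 0 := (integral_eq_zero_iff_of_nonneg hg_nonneg hg_int).mp hg0
  filter_upwards [hae0] with z hz
  simp only [Pi.zero_apply] at hz
  by_cases hmx : m z.1 = 0
  · rw [hqzero z.1 z.2 hmx, hqszero z.1 z.2 hmx]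
  · by_contra hne
    have hq' : 0 < q z := hqpos z.1 z.2 hmx
    have hqs' : 0 < qs z := hqspos z.1 z.2 hmx
    have e1 : Real.log (qs z) - Real.log (q z) = a z.1 + b z.2 := hlog' z.1 z.2 hmx
    have hgz : g z = (qs z - q z) * (Real.log (qs z) - Real.log (q z)) := by
      rw [hg_eq z, e1]
    rcases lt_or_gt_of_ne hne with h | h
    · have hlt := Real.log_lt_log hq' h
      nlinarith [mul_pos (sub_pos.mpr h) (sub_pos.mpr hlt)]
    · have hlt := Real.log_lt_log hqs' h
      nlinarith [mul_pos (sub_pos.mpr h) (sub_pos.mpr hlt)]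
end

section
/- Pythagorean identity for the reciprocal projection: if m is a discrete Markov process and r is a discrete reciprocal process with KL(m||r) < ∞ and KL(m||proj_R(m)) < ∞, then KL(m||r) = KL(m||proj_R(m)) + KL(proj_R(m)||r). -/
open MeasureTheory Real

noncomputable def gaussD {D : ℕ} (m : EuclideanSpace ℝ (Fin D)) (v : ℝ)
    (x : EuclideanSpace ℝ (Fin D)) : ℝ :=
  (2 * Real.pi * v) ^ (-(D : ℝ) / 2) * Real.exp (-‖x - m‖ ^ 2 / (2 * v))

/-- Discrete Brownian bridge conditional density on the intermediate points of a path. -/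
noncomputable def bridgeDensity {D N : ℕ} (ε : ℝ) (t : Fin (N + 2) → ℝ)
    (x : Fin (N + 2) → EuclideanSpace ℝ (Fin D)) : ℝ :=
  ∏ n : Fin N,
    gaussD (x n.castSucc.castSucc +
        ((t n.succ.castSucc - t n.castSucc.castSucc) / (1 - t n.castSucc.castSucc)) •
          (x (Fin.last (N + 1)) - x n.castSucc.castSucc))
      (ε * (t n.succ.castSucc - t n.castSucc.castSucc) * (1 - t n.succ.castSucc) /
        (1 - t n.castSucc.castSucc))
      (x n.succ.castSucc)

open scoped ENNReal

lemma gaussD_pos {D : ℕ} (m : EuclideanSpace ℝ (Fin D)) {v : ℝ} (hv : 0 < v)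
    (x : EuclideanSpace ℝ (Fin D)) : 0 < gaussD m v x :=
  mul_pos (Real.rpow_pos_of_pos (by positivity) _) (Real.exp_pos _)

lemma exp_sq_integrable {D : ℕ} {b : ℝ} (hb : 0 < b) :
    Integrable (fun x : EuclideanSpace ℝ (Fin D) => Real.exp (-b * ‖x‖ ^ 2)) := by
  have h := (GaussianFourier.integrable_cexp_neg_mul_sq_norm_add (V := EuclideanSpace ℝ (Fin D))
    (b := (b : ℂ)) (by simpa using hb) 0 0).norm
  refine h.congr (Filter.Eventually.of_forall fun x => ?_)
  simp [Complex.norm_exp]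
  exact Or.inl (by norm_cast)

lemma gaussD_integrable {D : ℕ} (m : EuclideanSpace ℝ (Fin D)) {v : ℝ} (hv : 0 < v) :
    Integrable (gaussD m v) := by
  unfold gaussD
  apply Integrable.const_mul
  have h1 : ∀ x : EuclideanSpace ℝ (Fin D),
      Real.exp (-‖x - m‖ ^ 2 / (2 * v)) = (fun y : EuclideanSpace ℝ (Fin D) =>
        Real.exp (-(1 / (2 * v)) * ‖y‖ ^ 2)) (x - m) := by
    intro x; congr 1; field_simp
  simp_rw [h1]
  exact (exp_sq_integrable (by positivity)).comp_sub_right m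

lemma gaussD_integral {D : ℕ} (m : EuclideanSpace ℝ (Fin D)) {v : ℝ} (hv : 0 < v) :
    ∫ x : EuclideanSpace ℝ (Fin D), gaussD m v x = 1 := by
  unfold gaussD
  rw [MeasureTheory.integral_const_mul]
  have h1 : ∀ x : EuclideanSpace ℝ (Fin D),
      Real.exp (-‖x - m‖ ^ 2 / (2 * v)) = (fun y : EuclideanSpace ℝ (Fin D) =>
        Real.exp (-(1 / (2 * v)) * ‖y‖ ^ 2)) (x - m) := by
    intro x; congr 1; field_simp
  simp_rw [h1]
  rw [integral_sub_right_eq_self (fun y : EuclideanSpace ℝ (Fin D) =>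
    Real.exp (-(1 / (2 * v)) * ‖y‖ ^ 2)) m]
  rw [GaussianFourier.integral_rexp_neg_mul_sq_norm (by positivity : (0:ℝ) < 1 / (2 * v))]
  rw [finrank_euclideanSpace_fin]
  have h2 : (π / (1 / (2 * v))) = 2 * π * v := by field_simp
  rw [h2, ← Real.rpow_add (by positivity), neg_div]
  simp

lemma gaussD_lintegral {D : ℕ} (m : EuclideanSpace ℝ (Fin D)) {v : ℝ} (hv : 0 < v) :
    ∫⁻ x : EuclideanSpace ℝ (Fin D), ENNReal.ofReal (gaussD m v x) = 1 := by
  rw [← ofReal_integral_eq_lintegral_ofReal (gaussD_integrable m hv)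
    (Filter.Eventually.of_forall fun x => (gaussD_pos m hv x).le),
    gaussD_integral m hv, ENNReal.ofReal_one]

section Bridge

variable {D N : ℕ} (ε : ℝ) (t : Fin (N + 2) → ℝ)

/-- single factor of the bridge density -/
noncomputable def bFactor (n : Fin N) (x : Fin (N + 2) → EuclideanSpace ℝ (Fin D)) : ℝ :=
  gaussD (x n.castSucc.castSucc +
        ((t n.succ.castSucc - t n.castSucc.castSucc) / (1 - t n.castSucc.castSucc)) •
          (x (Fin.last (N + 1)) - x n.castSucc.castSucc))
      (ε * (t n.succ.castSucc - t n.castSucc.castSucc) * (1 - t n.succ.castSucc) /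
        (1 - t n.castSucc.castSucc))
      (x n.succ.castSucc)

lemma bridgeDensity_eq_prod (x : Fin (N + 2) → EuclideanSpace ℝ (Fin D)) :
    bridgeDensity ε t x = ∏ n : Fin N, bFactor ε t n x := rfl

variable {ε t}
variable (hε : 0 < ε) (htm : StrictMono t) (ht1 : t (Fin.last (N + 1)) = 1)

include htm ht1 in
lemma bVar_pos (hε : 0 < ε) (n : Fin N) :
    0 < ε * (t n.succ.castSucc - t n.castSucc.castSucc) * (1 - t n.succ.castSucc) /
        (1 - t n.castSucc.castSucc) := by
  have h1 : t n.castSucc.castSucc < t n.succ.castSucc := htm (by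
    simp [Fin.lt_def])
  have h2 : t n.succ.castSucc < 1 := ht1 ▸ htm (Fin.castSucc_lt_last _)
  have h3 : t n.castSucc.castSucc < 1 := ht1 ▸ htm (Fin.castSucc_lt_last _)
  have := sub_pos.2 h1
  have := sub_pos.2 h2
  have := sub_pos.2 h3
  positivity

include htm ht1 in
lemma bFactor_pos (hε : 0 < ε) (n : Fin N) (x : Fin (N + 2) → EuclideanSpace ℝ (Fin D)) :
    0 < bFactor ε t n x :=
  gaussD_pos _ (bVar_pos htm ht1 hε n) _

include htm ht1 in
lemma bridgeDensity_pos (hε : 0 < ε) (x : Fin (N + 2) → EuclideanSpace ℝ (Fin D)) :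
    0 < bridgeDensity ε t x := by
  rw [bridgeDensity_eq_prod]
  exact Finset.prod_pos fun n _ => bFactor_pos htm ht1 hε n x

lemma bFactor_continuous (n : Fin N) : Continuous (bFactor ε t n (D := D)) := by
  unfold bFactor gaussD
  fun_prop

lemma bridgeDensity_measurable : Measurable (bridgeDensity ε t (D := D)) := by
  have : Continuous (bridgeDensity ε t (D := D)) := by
    simp_rw [funext (bridgeDensity_eq_prod ε t)]
    exact continuous_finset_prod _ fun n _ => bFactor_continuous n
  exact this.measurable

end Bridge

open Function in
lemma lmarg_pull {δ : Type*} [DecidableEq δ] {κ : δ → Type*} [∀ i, MeasurableSpace (κ i)]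
    (μ : ∀ i, Measure (κ i)) (s : Finset δ) (g h : (∀ i, κ i) → ℝ≥0∞)
    (x : ∀ i, κ i) (hg : ∀ y, g (updateFinset x s y) = g x) (hh : Measurable h) :
    (∫⋯∫⁻_s, (fun z => g z * h z) ∂μ) x = g x * (∫⋯∫⁻_s, h ∂μ) x := by
  simp only [MeasureTheory.lmarginal]
  simp only [hg]
  exact lintegral_const_mul _ (hh.comp measurable_updateFinset)

section Chain

variable {D N : ℕ} {ε : ℝ} {t : Fin (N + 2) → ℝ}
variable (hε : 0 < ε) (htm : StrictMono t) (ht1 : t (Fin.last (N + 1)) = 1)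

/-- ennreal version of factor -/
noncomputable def eFactor (ε : ℝ) (t : Fin (N + 2) → ℝ) (n : Fin N)
    (x : Fin (N + 2) → EuclideanSpace ℝ (Fin D)) : ℝ≥0∞ :=
  ENNReal.ofReal (bFactor ε t n x)

lemma eFactor_measurable (n : Fin N) : Measurable (eFactor ε t n (D := D)) :=
  ENNReal.measurable_ofReal.comp (bFactor_continuous (D := D) n).measurable

open Function in
include hε htm ht1 in
lemma chain_lemma (k : ℕ) (hk : k ≤ N) (x : Fin (N + 2) → EuclideanSpace ℝ (Fin D)) :
    (∫⋯∫⁻_(Finset.univ.filter fun i : Fin (N+2) => k + 1 ≤ i.val ∧ i.val ≤ N),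
      (fun z => ∏ n ∈ Finset.univ.filter (fun n : Fin N => k ≤ n.val), eFactor ε t n z)
      ∂(fun _ => (volume : Measure (EuclideanSpace ℝ (Fin D))))) x = 1 := by
  obtain ⟨d, hd⟩ : ∃ d, N - k = d := ⟨_, rfl⟩
  induction d generalizing k x with
  | zero =>
    have hkN : k = N := by omega
    subst hkN
    have h1 : (Finset.univ.filter fun i : Fin (k+2) => k + 1 ≤ i.val ∧ i.val ≤ k) = ∅ := by
      apply Finset.filter_false_of_mem; intro i _; omega
    have h2 : (Finset.univ.filter (fun n : Fin k => k ≤ n.val)) = ∅ := by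
      apply Finset.filter_false_of_mem; intro n _; have := n.isLt; omega
    rw [h1, h2]; simp
  | succ d ih =>
    have hkN : k < N := by omega
    set j : Fin (N + 2) := ⟨k + 1, by omega⟩ with hj
    set nn : Fin N := ⟨k, hkN⟩ with hnn
    have hidx : nn.succ.castSucc = j := by simp [hj, hnn, Fin.ext_iff]
    have hprev : (nn.castSucc.castSucc : Fin (N + 2)) = ⟨k, by omega⟩ := by
      simp [hnn, Fin.ext_iff]
    have hfs : (Finset.univ.filter fun i : Fin (N+2) => k + 1 ≤ i.val ∧ i.val ≤ N)
        = insert j (Finset.univ.filter fun i : Fin (N+2) => k + 2 ≤ i.val ∧ i.val ≤ N) := by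
      ext i; simp [Finset.mem_insert, Fin.ext_iff, hj]; omega
    have hps : (Finset.univ.filter (fun n : Fin N => k ≤ n.val))
        = insert nn (Finset.univ.filter (fun n : Fin N => k + 1 ≤ n.val)) := by
      ext n; simp [Finset.mem_insert, Fin.ext_iff, hnn]; omega
    have hjnot : j ∉ (Finset.univ.filter fun i : Fin (N+2) => k + 2 ≤ i.val ∧ i.val ≤ N) := by
      simp [hj]
    have hmeasP : ∀ (s : Finset (Fin N)), Measurable (fun z : Fin (N+2) → EuclideanSpace ℝ (Fin D)
        => ∏ n ∈ s, eFactor ε t n z) := fun s =>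
      Finset.measurable_prod s fun n _ => eFactor_measurable n
    rw [hfs, MeasureTheory.lmarginal_insert _ (hmeasP _) hjnot x]
    have hstep : ∀ y : EuclideanSpace ℝ (Fin D),
        (∫⋯∫⁻_(Finset.univ.filter fun i : Fin (N+2) => k + 2 ≤ i.val ∧ i.val ≤ N),
          (fun z => ∏ n ∈ Finset.univ.filter (fun n : Fin N => k ≤ n.val), eFactor ε t n z)
          ∂(fun _ => volume)) (update x j y)
        = eFactor ε t nn (update x j y) := by
      intro y
      have hsplit : (fun z : Fin (N+2) → EuclideanSpace ℝ (Fin D) =>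
          ∏ n ∈ Finset.univ.filter (fun n : Fin N => k ≤ n.val), eFactor ε t n z)
          = fun z => eFactor ε t nn z *
            ∏ n ∈ Finset.univ.filter (fun n : Fin N => k + 1 ≤ n.val), eFactor ε t n z := by
        funext z
        rw [hps, Finset.prod_insert (by simp [hnn])]
      rw [hsplit, lmarg_pull _ _ _ _ _ ?hg (hmeasP _)]
      case hg =>
        intro yy
        have hread : ∀ i : Fin (N + 2), (i.val ≤ k + 1 ∨ i.val = N + 1) →
            updateFinset (update x j y) (Finset.univ.filter fun i : Fin (N+2) =>
              k + 2 ≤ i.val ∧ i.val ≤ N) yy i = update x j y i := by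
          intro i hi
          rw [updateFinset]
          simp only [Finset.mem_filter, Finset.mem_univ, true_and]
          rw [dif_neg (by omega)]
        unfold eFactor bFactor
        rw [hread nn.succ.castSucc (Or.inl (le_refl (k+1))),
          hread nn.castSucc.castSucc (Or.inl (Nat.le_succ k)),
          hread (Fin.last (N+1)) (Or.inr rfl)]
      rw [ih (k+1) (by omega) _ (by omega), mul_one]
    simp_rw [hstep]
    have hrd : ∀ y : EuclideanSpace ℝ (Fin D), eFactor ε t nn (update x j y)
        = ENNReal.ofReal (gaussD ((update x j y) nn.castSucc.castSucc +
            ((t nn.succ.castSucc - t nn.castSucc.castSucc) / (1 - t nn.castSucc.castSucc)) •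
              ((update x j y) (Fin.last (N + 1)) - (update x j y) nn.castSucc.castSucc))
          (ε * (t nn.succ.castSucc - t nn.castSucc.castSucc) * (1 - t nn.succ.castSucc) /
            (1 - t nn.castSucc.castSucc)) y) := by
      intro y
      unfold eFactor bFactor
      rw [hidx, update_self]
    simp_rw [hrd]
    have hmean : ∀ y : EuclideanSpace ℝ (Fin D), (update x j y) nn.castSucc.castSucc
        = x nn.castSucc.castSucc := fun y => update_of_ne (by rw [hprev]; simp [hj, Fin.ext_iff]) _ _
    have hlast : ∀ y : EuclideanSpace ℝ (Fin D), (update x j y) (Fin.last (N + 1))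
        = x (Fin.last (N + 1)) := fun y =>
      update_of_ne (by simp [hj, Fin.ext_iff, Fin.last]; omega) _ _
    simp_rw [hmean, hlast]
    exact gaussD_lintegral _ (bVar_pos htm ht1 hε nn)

end Chain

section Key

variable {D N : ℕ} {ε : ℝ} {t : Fin (N + 2) → ℝ}
variable (hε : 0 < ε) (htm : StrictMono t) (ht1 : t (Fin.last (N + 1)) = 1)

open Function in
include hε htm ht1 in
lemma key_lintegral (f : (EuclideanSpace ℝ (Fin D)) × (EuclideanSpace ℝ (Fin D)) → ℝ≥0∞)
    (hf : Measurable f) :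
    ∫⁻ x : Fin (N + 2) → EuclideanSpace ℝ (Fin D),
      ENNReal.ofReal (bridgeDensity ε t x) * f (x 0, x (Fin.last (N + 1)))
      = ∫⁻ w, f w := by
  have h0l : (0 : Fin (N + 2)) ≠ Fin.last (N + 1) := by
    simp [Fin.ext_iff, Fin.last]
  -- the integrand and its measurability
  set F : (Fin (N + 2) → EuclideanSpace ℝ (Fin D)) → ℝ≥0∞ :=
    fun z => ENNReal.ofReal (bridgeDensity ε t z) * f (z 0, z (Fin.last (N + 1))) with hF
  have hBe : ∀ z : Fin (N + 2) → EuclideanSpace ℝ (Fin D), ENNReal.ofReal (bridgeDensity ε t z)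
      = ∏ n ∈ (Finset.univ.filter (fun n : Fin N => 0 ≤ n.val)), eFactor ε t n z := by
    intro z
    have : (Finset.univ.filter (fun n : Fin N => 0 ≤ n.val)) = Finset.univ := by simp
    rw [this, bridgeDensity_eq_prod]
    exact ENNReal.ofReal_prod_of_nonneg fun n _ =>
      (gaussD_pos _ (bVar_pos htm ht1 hε n) _).le
  have hfep : Measurable fun z : Fin (N + 2) → EuclideanSpace ℝ (Fin D) =>
      f (z 0, z (Fin.last (N + 1))) :=
    hf.comp ((measurable_pi_apply _).prodMk (measurable_pi_apply _))
  have hFmeas : Measurable F := by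
    apply Measurable.mul _ hfep
    exact ENNReal.measurable_ofReal.comp (bridgeDensity_measurable)
  have hvol : (volume : Measure (Fin (N + 2) → EuclideanSpace ℝ (Fin D)))
      = Measure.pi fun _ => volume := volume_pi
  rw [hvol, lintegral_eq_lmarginal_univ (fun _ => (0 : EuclideanSpace ℝ (Fin D)))]
  have huniv : (Finset.univ : Finset (Fin (N + 2)))
      = insert 0 (insert (Fin.last (N + 1))
          (Finset.univ.filter fun i : Fin (N+2) => 0 + 1 ≤ i.val ∧ i.val ≤ N)) := by
    ext i
    simp only [Finset.mem_insert, Finset.mem_filter, Finset.mem_univ, true_and, true_iff,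
      Fin.ext_iff, Fin.val_last, Fin.val_zero]
    have := i.isLt
    omega
  have h0not : (0 : Fin (N + 2)) ∉ insert (Fin.last (N + 1))
      (Finset.univ.filter fun i : Fin (N+2) => 0 + 1 ≤ i.val ∧ i.val ≤ N) := by
    simp [Fin.ext_iff, Fin.last]
  have hlnot : (Fin.last (N + 1)) ∉
      (Finset.univ.filter fun i : Fin (N+2) => 0 + 1 ≤ i.val ∧ i.val ≤ N) := by
    simp [Fin.last]
  rw [huniv, MeasureTheory.lmarginal_insert _ hFmeas h0not]
  have hinner : ∀ y0 : EuclideanSpace ℝ (Fin D),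
      (∫⋯∫⁻_insert (Fin.last (N + 1))
          (Finset.univ.filter fun i : Fin (N+2) => 0 + 1 ≤ i.val ∧ i.val ≤ N), F
        ∂fun _ => volume) (update (fun _ => 0) 0 y0)
      = ∫⁻ y1, f (y0, y1) := by
    intro y0
    rw [MeasureTheory.lmarginal_insert _ hFmeas hlnot]
    congr 1
    funext y1
    set z := update (update (fun _ => (0 : EuclideanSpace ℝ (Fin D))) 0 y0) (Fin.last (N+1)) y1
      with hz
    have hpull : (∫⋯∫⁻_(Finset.univ.filter fun i : Fin (N+2) => 0 + 1 ≤ i.val ∧ i.val ≤ N),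
        F ∂fun _ => volume) z
        = f (z 0, z (Fin.last (N + 1))) *
          (∫⋯∫⁻_(Finset.univ.filter fun i : Fin (N+2) => 0 + 1 ≤ i.val ∧ i.val ≤ N),
            (fun w => ∏ n ∈ (Finset.univ.filter (fun n : Fin N => 0 ≤ n.val)), eFactor ε t n w)
            ∂fun _ => volume) z := by
      have : F = fun w => f (w 0, w (Fin.last (N + 1))) *
          ∏ n ∈ (Finset.univ.filter (fun n : Fin N => 0 ≤ n.val)), eFactor ε t n w := by
        funext w; simp only [hF]; rw [hBe w, mul_comm]
      rw [this]
      apply lmarg_pull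
      · intro yy
        have hread : ∀ i : Fin (N + 2),
            i ∉ (Finset.univ.filter fun i : Fin (N+2) => 0 + 1 ≤ i.val ∧ i.val ≤ N) →
            updateFinset z (Finset.univ.filter fun i : Fin (N+2) => 0 + 1 ≤ i.val ∧ i.val ≤ N)
              yy i = z i := by
          intro i hi
          rw [updateFinset]
          simp only [Finset.mem_filter, Finset.mem_univ, true_and] at hi ⊢
          rw [dif_neg hi]
        rw [hread 0 (by simp), hread (Fin.last (N+1)) (by simp [Fin.last])]
      · exact Finset.measurable_prod _ fun n _ => eFactor_measurable n
    rw [hpull, chain_lemma hε htm ht1 0 (by omega) z, mul_one]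
    have hz0 : z 0 = y0 := by
      rw [hz, update_of_ne h0l, update_self]
    have hzl : z (Fin.last (N + 1)) = y1 := by rw [hz, update_self]
    rw [hz0, hzl]
  simp_rw [hinner]
  rw [show (volume : Measure ((EuclideanSpace ℝ (Fin D)) × (EuclideanSpace ℝ (Fin D))))
      = (volume : Measure (EuclideanSpace ℝ (Fin D))).prod volume from MeasureTheory.Measure.volume_eq_prod _ _,
    lintegral_prod f hf.aemeasurable]

end Key

section Transfer

variable {D N : ℕ} {ε : ℝ} {t : Fin (N + 2) → ℝ}
variable (hε : 0 < ε) (htm : StrictMono t) (ht1 : t (Fin.last (N + 1)) = 1)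

include hε htm ht1 in
lemma null_pull {S : Set ((EuclideanSpace ℝ (Fin D)) × (EuclideanSpace ℝ (Fin D)))}
    (hS : volume S = 0) :
    ∀ᵐ x : Fin (N + 2) → EuclideanSpace ℝ (Fin D),
      (x 0, x (Fin.last (N + 1))) ∉ S := by
  set S' := toMeasurable volume S with hS'
  have hmS' : MeasurableSet S' := measurableSet_toMeasurable _ _
  have hS'0 : volume S' = 0 := by rw [hS', measure_toMeasurable]; exact hS
  have hkey := key_lintegral hε htm ht1 (S'.indicator fun _ => 1)
    (measurable_one.indicator hmS')
  replace hkey : ∫⁻ x : Fin (N + 2) → EuclideanSpace ℝ (Fin D),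
      ENNReal.ofReal (bridgeDensity ε t x) *
        (S'.indicator (fun _ => (1:ℝ≥0∞)) (x 0, x (Fin.last (N + 1)))) = 0 := by
    rw [hkey]; exact (lintegral_indicator_one hmS').trans hS'0
  have hmeas : Measurable fun x : Fin (N + 2) → EuclideanSpace ℝ (Fin D) =>
      ENNReal.ofReal (bridgeDensity ε t x) *
        (S'.indicator (fun _ => (1:ℝ≥0∞)) (x 0, x (Fin.last (N + 1)))) :=
    (ENNReal.measurable_ofReal.comp bridgeDensity_measurable).mul
      ((measurable_one.indicator hmS').comp
        ((measurable_pi_apply _).prodMk (measurable_pi_apply _)))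
  have h0 := (lintegral_eq_zero_iff hmeas).1 hkey
  filter_upwards [h0] with x hx hmem
  have h1 : S'.indicator (fun _ => (1:ℝ≥0∞)) (x 0, x (Fin.last (N + 1))) = 1 :=
    Set.indicator_of_mem (subset_toMeasurable _ _ hmem) _
  rw [h1, mul_one] at hx
  have h2 : (0:ℝ) < bridgeDensity ε t x := bridgeDensity_pos htm ht1 hε x
  simp only [Pi.zero_apply, ENNReal.ofReal_eq_zero] at hx
  linarith

include hε htm ht1 in
lemma marg_integral (h : (EuclideanSpace ℝ (Fin D)) × (EuclideanSpace ℝ (Fin D)) → ℝ)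
    (hh : Measurable h)
    (hi : Integrable (fun x : Fin (N + 2) → EuclideanSpace ℝ (Fin D) =>
      bridgeDensity ε t x * h (x 0, x (Fin.last (N + 1))))) :
    Integrable h ∧
      (∫ x : Fin (N + 2) → EuclideanSpace ℝ (Fin D),
        bridgeDensity ε t x * h (x 0, x (Fin.last (N + 1)))) = ∫ w, h w := by
  set F := fun x : Fin (N + 2) → EuclideanSpace ℝ (Fin D) =>
    bridgeDensity ε t x * h (x 0, x (Fin.last (N + 1))) with hF
  have hBpos := bridgeDensity_pos htm ht1 hε (D := D)
  have e1 : ∫⁻ x, ENNReal.ofReal (F x) = ∫⁻ w, ENNReal.ofReal (h w) := by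
    have : ∀ x, ENNReal.ofReal (F x) = ENNReal.ofReal (bridgeDensity ε t x) *
        (fun w => ENNReal.ofReal (h w)) (x 0, x (Fin.last (N + 1))) := fun x =>
      ENNReal.ofReal_mul (hBpos x).le
    simp_rw [this]
    exact key_lintegral hε htm ht1 _ (ENNReal.measurable_ofReal.comp hh)
  have e2 : ∫⁻ x, ENNReal.ofReal (-F x) = ∫⁻ w, ENNReal.ofReal (-h w) := by
    have : ∀ x, ENNReal.ofReal (-F x) = ENNReal.ofReal (bridgeDensity ε t x) *
        (fun w => ENNReal.ofReal (-h w)) (x 0, x (Fin.last (N + 1))) := by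
      intro x
      rw [← ENNReal.ofReal_mul (hBpos x).le]
      congr 1; simp [hF]
    simp_rw [this]
    exact key_lintegral hε htm ht1 _ (ENNReal.measurable_ofReal.comp hh.neg)
  have hFlt : ∫⁻ x, ENNReal.ofReal (F x) < ⊤ := by
    refine lt_of_le_of_lt (lintegral_mono fun x => ?_) hi.2
    exact Real.ofReal_le_enorm _
  have hFlt' : ∫⁻ x, ENNReal.ofReal (-F x) < ⊤ := by
    refine lt_of_le_of_lt (lintegral_mono fun x => ?_) hi.neg.2
    exact Real.ofReal_le_enorm _
  have hplt : ∫⁻ w, ENNReal.ofReal (h w) < ⊤ := e1 ▸ hFlt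
  have hnlt : ∫⁻ w, ENNReal.ofReal (-h w) < ⊤ := e2 ▸ hFlt'
  have hhint : Integrable h := by
    refine ⟨hh.aestronglyMeasurable, ?_⟩
    unfold HasFiniteIntegral
    have : ∀ w, ‖h w‖ₑ = ENNReal.ofReal (h w) + ENNReal.ofReal (-h w) := by
      intro w
      rw [Real.enorm_eq_ofReal_abs]
      rcases le_total 0 (h w) with hw | hw
      · rw [abs_of_nonneg hw, ENNReal.ofReal_of_nonpos (neg_nonpos.2 hw), add_zero]
      · rw [abs_of_nonpos hw, ENNReal.ofReal_of_nonpos hw, zero_add]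
    simp_rw [this]
    rw [lintegral_add_left (hh.ennreal_ofReal : Measurable fun w => ENNReal.ofReal (h w))]
    exact ENNReal.add_lt_top.2 ⟨hplt, hnlt⟩
  refine ⟨hhint, ?_⟩
  rw [MeasureTheory.integral_eq_lintegral_pos_part_sub_lintegral_neg_part hi,
    MeasureTheory.integral_eq_lintegral_pos_part_sub_lintegral_neg_part hhint, e1, e2]

end Transfer


/-- Pythagorean identity for the discrete reciprocal projection: if `m` is a discrete
Markov process and `r` is a discrete reciprocal process with `KL(m‖r) < ∞` and
`KL(m‖proj_R(m)) < ∞`, then `KL(m‖r) = KL(m‖proj_R(m)) + KL(proj_R(m)‖r)`, where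
`proj_R(m) = p^{W^ε}(x_in|x0,x1)·m(x0,x1)`. -/
theorem stmt6 {D N : ℕ} (ε : ℝ) (hε : 0 < ε)
    (t : Fin (N + 2) → ℝ) (ht0 : t 0 = 0) (ht1 : t (Fin.last (N + 1)) = 1)
    (htm : StrictMono t)
    -- a discrete Markov process m, given by its density M
    (M : (Fin (N + 2) → EuclideanSpace ℝ (Fin D)) → ℝ)
    (hM0 : ∀ x, 0 < M x) (hMP : ∫ x, M x = 1)
    (hMarkov : ∃ (m0 : EuclideanSpace ℝ (Fin D) → ℝ)
        (tr : Fin (N + 1) → EuclideanSpace ℝ (Fin D) → EuclideanSpace ℝ (Fin D) → ℝ),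
      ∀ x, M x = m0 (x 0) * ∏ n : Fin (N + 1), tr n (x n.castSucc) (x n.succ))
    -- the endpoint joint marginal m(x0,x1) of M
    (m01 : (EuclideanSpace ℝ (Fin D)) × (EuclideanSpace ℝ (Fin D)) → ℝ)
    (hm010 : ∀ w, 0 < m01 w)
    (hm01 : ∀ (f : (EuclideanSpace ℝ (Fin D)) × (EuclideanSpace ℝ (Fin D)) → ℝ),
      Measurable f → (∀ w, |f w| ≤ 1) →
      (∫ x, M x * f (x 0, x (Fin.last (N + 1)))) = ∫ w, m01 w * f w)
    -- a discrete reciprocal process r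
    (rc : (EuclideanSpace ℝ (Fin D)) × (EuclideanSpace ℝ (Fin D)) → ℝ)
    (hrc0 : ∀ w, 0 < rc w) (hrcP : ∫ w, rc w = 1)
    -- finiteness assumptions: KL(m‖r) < ∞, KL(m‖proj_R(m)) < ∞, KL(proj_R(m)‖r) < ∞
    (hint1 : Integrable (fun x => M x * Real.log (M x /
      (bridgeDensity ε t x * rc (x 0, x (Fin.last (N + 1)))))))
    (hint2 : Integrable (fun x => M x * Real.log (M x /
      (bridgeDensity ε t x * m01 (x 0, x (Fin.last (N + 1)))))))
    (hint3 : Integrable (fun x : Fin (N + 2) → EuclideanSpace ℝ (Fin D) =>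
      (bridgeDensity ε t x * m01 (x 0, x (Fin.last (N + 1)))) *
        Real.log ((bridgeDensity ε t x * m01 (x 0, x (Fin.last (N + 1)))) /
          (bridgeDensity ε t x * rc (x 0, x (Fin.last (N + 1))))))) :
    kl volume M (fun x => bridgeDensity ε t x * rc (x 0, x (Fin.last (N + 1))))
      = kl volume M (fun x => bridgeDensity ε t x * m01 (x 0, x (Fin.last (N + 1))))
        + kl volume
            (fun x : Fin (N + 2) → EuclideanSpace ℝ (Fin D) =>
              bridgeDensity ε t x * m01 (x 0, x (Fin.last (N + 1))))
            (fun x => bridgeDensity ε t x * rc (x 0, x (Fin.last (N + 1)))) := by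
    classical
  have hBpos : ∀ x : Fin (N + 2) → EuclideanSpace ℝ (Fin D), 0 < bridgeDensity ε t x :=
    bridgeDensity_pos htm ht1 hε
  have hepmeas : Measurable (fun x : Fin (N + 2) → EuclideanSpace ℝ (Fin D) =>
      ((x 0, x (Fin.last (N + 1))) : (EuclideanSpace ℝ (Fin D)) × (EuclideanSpace ℝ (Fin D)))) :=
    (measurable_pi_apply _).prodMk (measurable_pi_apply _)
  -- integrability of densities
  have hMi : Integrable M := by
    by_contra hc; rw [MeasureTheory.integral_undef hc] at hMP; norm_num at hMP
  have hm01P : ∫ w, m01 w = 1 := by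
    have h := hm01 (fun _ => 1) measurable_const (fun w => by norm_num)
    simp only [mul_one] at h
    exact h.symm.trans hMP
  have hm01i : Integrable m01 := by
    by_contra hc; rw [MeasureTheory.integral_undef hc] at hm01P; norm_num at hm01P
  have hrci : Integrable rc := by
    have h : ∫ w, rc w = 1 := hrcP
    by_contra hc; rw [MeasureTheory.integral_undef hc] at h; norm_num at h
  -- measurable modifications
  have hm01am : AEMeasurable m01 := hm01i.aemeasurable
  have hrcam : AEMeasurable rc := hrci.aemeasurable
  set m01' : (EuclideanSpace ℝ (Fin D)) × (EuclideanSpace ℝ (Fin D)) → ℝ := hm01am.mk m01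
    with hm01'def
  set rc' : (EuclideanSpace ℝ (Fin D)) × (EuclideanSpace ℝ (Fin D)) → ℝ := hrcam.mk rc
    with hrc'def
  have hm01meas : Measurable m01' := hm01am.measurable_mk
  have hrcmeas : Measurable rc' := hrcam.measurable_mk
  have hm01ae : m01 =ᵐ[volume] m01' := hm01am.ae_eq_mk
  have hrcae : rc =ᵐ[volume] rc' := hrcam.ae_eq_mk
  have hG'meas : Measurable (fun w => Real.log (m01' w / rc' w)) :=
    Real.measurable_log.comp (hm01meas.div hrcmeas)
  -- lift the a.e. equality to path space
  have hWae : ∀ᵐ w : (EuclideanSpace ℝ (Fin D)) × (EuclideanSpace ℝ (Fin D)),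
      m01 w = m01' w ∧ rc w = rc' w := hm01ae.and hrcae
  have hepae : ∀ᵐ x : Fin (N + 2) → EuclideanSpace ℝ (Fin D),
      m01 (x 0, x (Fin.last (N + 1))) = m01' (x 0, x (Fin.last (N + 1))) ∧
        rc (x 0, x (Fin.last (N + 1))) = rc' (x 0, x (Fin.last (N + 1))) := by
    have hnull : volume {w : (EuclideanSpace ℝ (Fin D)) × (EuclideanSpace ℝ (Fin D)) |
        ¬(m01 w = m01' w ∧ rc w = rc' w)} = 0 := ae_iff.1 hWae
    have h := null_pull hε htm ht1 hnull
    filter_upwards [h] with x hx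
    exact not_not.1 hx
  -- pointwise identities
  have hpt1 : ∀ x, M x * Real.log (M x /
        (bridgeDensity ε t x * rc (x 0, x (Fin.last (N + 1)))))
      = M x * Real.log (M x / (bridgeDensity ε t x * m01 (x 0, x (Fin.last (N + 1)))))
        + M x * Real.log (m01 (x 0, x (Fin.last (N + 1))) / rc (x 0, x (Fin.last (N + 1)))) := by
    intro x
    have hB := hBpos x
    have hM := hM0 x
    have hrcx := hrc0 (x 0, x (Fin.last (N + 1)))
    have hmx := hm010 (x 0, x (Fin.last (N + 1)))
    rw [Real.log_div hM.ne' (by positivity), Real.log_div hM.ne' (by positivity),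
      Real.log_mul hB.ne' hrcx.ne', Real.log_mul hB.ne' hmx.ne',
      Real.log_div hmx.ne' hrcx.ne']
    ring
  have hpt3 : ∀ x, (bridgeDensity ε t x * m01 (x 0, x (Fin.last (N + 1)))) *
        Real.log ((bridgeDensity ε t x * m01 (x 0, x (Fin.last (N + 1)))) /
          (bridgeDensity ε t x * rc (x 0, x (Fin.last (N + 1)))))
      = bridgeDensity ε t x * (m01 (x 0, x (Fin.last (N + 1))) *
          Real.log (m01 (x 0, x (Fin.last (N + 1))) / rc (x 0, x (Fin.last (N + 1))))) := by
    intro x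
    rw [mul_div_mul_left _ _ (hBpos x).ne']
    ring
  -- integrability of the cross term
  have hMG : Integrable (fun x => M x *
      Real.log (m01 (x 0, x (Fin.last (N + 1))) / rc (x 0, x (Fin.last (N + 1))))) := by
    refine (hint1.sub hint2).congr (Filter.Eventually.of_forall fun x => ?_)
    have := hpt1 x
    simp only [Pi.sub_apply]
    linarith
  have hMGp : Integrable (fun x => M x *
      Real.log (m01' (x 0, x (Fin.last (N + 1))) / rc' (x 0, x (Fin.last (N + 1))))) := by
    refine hMG.congr ?_
    filter_upwards [hepae] with x hx
    rw [hx.1, hx.2]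
  -- integrability of the reciprocal-projection term, primed version
  have hint3' : Integrable (fun x : Fin (N + 2) → EuclideanSpace ℝ (Fin D) =>
      bridgeDensity ε t x * (m01' (x 0, x (Fin.last (N + 1))) *
        Real.log (m01' (x 0, x (Fin.last (N + 1))) / rc' (x 0, x (Fin.last (N + 1)))))) := by
    refine hint3.congr ?_
    filter_upwards [hepae] with x hx
    rw [hpt3 x, hx.1, hx.2]
  have hmargA := marg_integral hε htm ht1
    (fun w => m01' w * Real.log (m01' w / rc' w)) (hm01meas.mul hG'meas) hint3'
  -- truncation argument
  set c : ℕ → (EuclideanSpace ℝ (Fin D)) × (EuclideanSpace ℝ (Fin D)) → ℝ :=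
    fun k w => max (-((k : ℝ) + 1)) (min ((k : ℝ) + 1) (Real.log (m01' w / rc' w))) with hc
  have hcmeas : ∀ k, Measurable (c k) := fun k =>
    measurable_const.max (measurable_const.min hG'meas)
  have hcabs : ∀ k w, |c k w| ≤ |Real.log (m01' w / rc' w)| := by
    intro k w
    set g := Real.log (m01' w / rc' w)
    have ha : (0:ℝ) ≤ (k : ℝ) + 1 := by positivity
    rw [abs_le]
    constructor
    · exact le_max_of_le_right (le_min ((neg_nonpos.2 (abs_nonneg g)).trans ha) (neg_abs_le g))
    · exact max_le ((neg_nonpos.2 ha).trans (abs_nonneg g))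
        ((min_le_right _ g).trans (le_abs_self g))
  have hctend : ∀ w, Filter.Tendsto (fun k => c k w) Filter.atTop
      (nhds (Real.log (m01' w / rc' w))) := by
    intro w
    set g := Real.log (m01' w / rc' w)
    apply tendsto_atTop_of_eventually_const (i₀ := ⌈|g|⌉₊)
    intro k hk
    have hgk : |g| ≤ (k : ℝ) + 1 := by
      calc |g| ≤ (⌈|g|⌉₊ : ℝ) := Nat.le_ceil _
        _ ≤ (k : ℝ) := by exact_mod_cast hk
        _ ≤ (k : ℝ) + 1 := by linarith
    have h1 : g ≤ (k : ℝ) + 1 := (le_abs_self g).trans hgk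
    have h2 : -((k : ℝ) + 1) ≤ g := by
      have := neg_abs_le g
      linarith [neg_le_neg hgk]
    simp only [hc]
    rw [min_eq_right h1, max_eq_right h2]
  -- the identity from the marginal hypothesis, for each truncation level
  have heq : ∀ k : ℕ, (∫ x, M x * c k (x 0, x (Fin.last (N + 1)))) = ∫ w, m01' w * c k w := by
    intro k
    set f : (EuclideanSpace ℝ (Fin D)) × (EuclideanSpace ℝ (Fin D)) → ℝ :=
      fun w => max (-1) (min 1 (Real.log (m01' w / rc' w) / ((k : ℝ) + 1))) with hf
    have hfmeas : Measurable f :=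
      measurable_const.max (measurable_const.min (hG'meas.div measurable_const))
    have hfb : ∀ w, |f w| ≤ 1 := by
      intro w
      rw [abs_le]
      exact ⟨le_max_left _ _, max_le (by norm_num) (min_le_left _ _)⟩
    have h := hm01 f hfmeas hfb
    have hk1 : (0:ℝ) < (k : ℝ) + 1 := by positivity
    have hck : ∀ w, c k w = ((k : ℝ) + 1) * f w := by
      intro w
      simp only [hc, hf]
      rw [mul_max_of_nonneg _ _ hk1.le, mul_min_of_nonneg _ _ hk1.le,
        mul_div_cancel₀ _ hk1.ne', mul_neg, mul_one]
    calc (∫ x, M x * c k (x 0, x (Fin.last (N + 1))))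
        = ((k : ℝ) + 1) * ∫ x, M x * f (x 0, x (Fin.last (N + 1))) := by
          rw [← MeasureTheory.integral_const_mul]
          congr 1; funext x; rw [hck]; ring
      _ = ((k : ℝ) + 1) * ∫ w, m01 w * f w := by rw [h]
      _ = ∫ w, m01 w * c k w := by
          rw [← MeasureTheory.integral_const_mul]
          congr 1; funext w; rw [hck]; ring
      _ = ∫ w, m01' w * c k w := by
          refine integral_congr_ae ?_
          filter_upwards [hm01ae] with w hw
          rw [hw]
  -- dominated convergence on both sides
  have hlim1 : Filter.Tendsto (fun k => ∫ x, M x * c k (x 0, x (Fin.last (N + 1))))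
      Filter.atTop (nhds (∫ x, M x *
        Real.log (m01' (x 0, x (Fin.last (N + 1))) / rc' (x 0, x (Fin.last (N + 1)))))) := by
    refine MeasureTheory.tendsto_integral_of_dominated_convergence
      (fun x => M x * |Real.log (m01' (x 0, x (Fin.last (N + 1))) /
        rc' (x 0, x (Fin.last (N + 1))))|)
      (fun k => hMi.aestronglyMeasurable.mul
        (((hcmeas k).comp hepmeas).aestronglyMeasurable)) ?_ ?_ ?_
    · refine hMGp.abs.congr (Filter.Eventually.of_forall fun x => ?_)
      dsimp only
      rw [abs_mul, abs_of_pos (hM0 x)]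
    · intro k
      refine Filter.Eventually.of_forall fun x => ?_
      rw [Real.norm_eq_abs, abs_mul, abs_of_pos (hM0 x)]
      exact mul_le_mul_of_nonneg_left (hcabs k _) (hM0 x).le
    · exact Filter.Eventually.of_forall fun x => (hctend _).const_mul _
  have hlim2 : Filter.Tendsto (fun k => ∫ w, m01' w * c k w)
      Filter.atTop (nhds (∫ w, m01' w * Real.log (m01' w / rc' w))) := by
    refine MeasureTheory.tendsto_integral_of_dominated_convergence
      (fun w => |m01' w| * |Real.log (m01' w / rc' w)|)
      (fun k => (hm01meas.mul (hcmeas k)).aestronglyMeasurable) ?_ ?_ ?_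
    · refine hmargA.1.abs.congr (Filter.Eventually.of_forall fun w => ?_)
      dsimp only
      rw [abs_mul]
    · intro k
      refine Filter.Eventually.of_forall fun w => ?_
      rw [Real.norm_eq_abs, abs_mul]
      exact mul_le_mul_of_nonneg_left (hcabs k _) (abs_nonneg _)
    · exact Filter.Eventually.of_forall fun w => (hctend _).const_mul _
  have h12 : (∫ x, M x * Real.log (m01' (x 0, x (Fin.last (N + 1))) /
        rc' (x 0, x (Fin.last (N + 1)))))
      = ∫ w, m01' w * Real.log (m01' w / rc' w) := by
    have h1 := hlim1
    rw [show (fun k => ∫ x, M x * c k (x 0, x (Fin.last (N + 1))))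
      = fun k => ∫ w, m01' w * c k w from funext heq] at h1
    exact tendsto_nhds_unique h1 hlim2
  -- assemble
  have hcross : (∫ x, M x * Real.log (m01 (x 0, x (Fin.last (N + 1))) /
        rc (x 0, x (Fin.last (N + 1)))))
      = ∫ x : Fin (N + 2) → EuclideanSpace ℝ (Fin D),
          (bridgeDensity ε t x * m01 (x 0, x (Fin.last (N + 1)))) *
            Real.log ((bridgeDensity ε t x * m01 (x 0, x (Fin.last (N + 1)))) /
              (bridgeDensity ε t x * rc (x 0, x (Fin.last (N + 1))))) := by
    have e1 : (∫ x, M x * Real.log (m01 (x 0, x (Fin.last (N + 1))) /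
        rc (x 0, x (Fin.last (N + 1)))))
        = ∫ x, M x * Real.log (m01' (x 0, x (Fin.last (N + 1))) /
            rc' (x 0, x (Fin.last (N + 1)))) := by
      refine integral_congr_ae ?_
      filter_upwards [hepae] with x hx
      rw [hx.1, hx.2]
    have e2 : (∫ x : Fin (N + 2) → EuclideanSpace ℝ (Fin D),
          (bridgeDensity ε t x * m01 (x 0, x (Fin.last (N + 1)))) *
            Real.log ((bridgeDensity ε t x * m01 (x 0, x (Fin.last (N + 1)))) /
              (bridgeDensity ε t x * rc (x 0, x (Fin.last (N + 1))))))
        = ∫ x : Fin (N + 2) → EuclideanSpace ℝ (Fin D),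
            bridgeDensity ε t x * (m01' (x 0, x (Fin.last (N + 1))) *
              Real.log (m01' (x 0, x (Fin.last (N + 1))) / rc' (x 0, x (Fin.last (N + 1))))) := by
      refine integral_congr_ae ?_
      filter_upwards [hepae] with x hx
      rw [hpt3 x, hx.1, hx.2]
    rw [e1, e2, h12, hmargA.2]
  -- final computation
  show (∫ x, M x * Real.log (M x /
        (bridgeDensity ε t x * rc (x 0, x (Fin.last (N + 1))))))
      = (∫ x, M x * Real.log (M x /
          (bridgeDensity ε t x * m01 (x 0, x (Fin.last (N + 1))))))
        + ∫ x : Fin (N + 2) → EuclideanSpace ℝ (Fin D),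
            (bridgeDensity ε t x * m01 (x 0, x (Fin.last (N + 1)))) *
              Real.log ((bridgeDensity ε t x * m01 (x 0, x (Fin.last (N + 1)))) /
                (bridgeDensity ε t x * rc (x 0, x (Fin.last (N + 1)))))
  rw [show (fun x => M x * Real.log (M x /
      (bridgeDensity ε t x * rc (x 0, x (Fin.last (N + 1))))))
    = fun x => M x * Real.log (M x /
        (bridgeDensity ε t x * m01 (x 0, x (Fin.last (N + 1)))))
      + M x * Real.log (m01 (x 0, x (Fin.last (N + 1))) / rc (x 0, x (Fin.last (N + 1))))
    from funext hpt1]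
  rw [MeasureTheory.integral_add hint2 hMG, hcross]
end
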